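/- There exists a polynomial vector f = (f1, f2, f3) of ternary cubics over the rationals (hence over C, by semicontinuity for generic f) whose catalecticant matrix C_f — the 9×6 matrix of second-order partial derivatives of f1, f2, f3 expressed in the monomial basis of linear forms — has rank 6, i.e. C_f is injective. -/
import Mathlib
open MvPolynomial
lemma cons_val_five {α : Type*} (x : α) (u : Fin 5 → α) : Matrix.vecCons x u 5 = u 4 := rfl

noncomputable def fv : Fin 3 → MvPolynomial (Fin 3) ℚ :=
![X 0 * X 0 * X 0 + X 0 * (X 1 * X 1), X 1 * X 1 * X 1 + X 0 * (X 2 * X 2),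
  X 2 * X 2 * X 2 + X 1 * X 1 * X 2]

noncomputable def bvec : Fin 6 → (Fin 3 → MvPolynomial (Fin 3) ℚ) :=
![![(6:ℚ) • X 0, 0, 0],
  ![(2:ℚ) • X 1, 0, 0],
  ![0, (2:ℚ) • X 2, 0],
  ![(2:ℚ) • X 0, (6:ℚ) • X 1, (2:ℚ) • X 2],
  ![0, 0, (2:ℚ) • X 1],
  ![0, (2:ℚ) • X 0, (6:ℚ) • X 2]]

set_option maxHeartbeats 2000000 in
lemma hcomp : ∀ uv : Fin 3 × Fin 3,
    (fun j : Fin 3 => pderiv uv.1 (pderiv uv.2 (fv j))) = bvec (![![0,1,2],![1,3,4],![2,4,5]] uv.1 uv.2) := by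
  intro ⟨u, v⟩
  fin_cases u <;> fin_cases v <;> funext j <;> fin_cases j <;>
    simp [fv, bvec, pderiv_X, pderiv_mul, smul_eq_C_mul, map_ofNat, cons_val_five, Matrix.cons_val_four, Matrix.vecHead, Matrix.vecTail] <;> ring

lemma bvec_li : LinearIndependent ℚ bvec := by
  rw [Fintype.linearIndependent_iff]
  intro c hc
  have key : ∀ (j i : Fin 3),
      ∑ k : Fin 6, c k * MvPolynomial.coeff (Finsupp.single i 1) (bvec k j) = 0 := by
    intro j i
    have h1 := congrArg (fun v : Fin 3 → MvPolynomial (Fin 3) ℚ =>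
      MvPolynomial.coeff (Finsupp.single i 1) (v j)) hc
    simpa [Finset.sum_apply, MvPolynomial.coeff_sum, MvPolynomial.coeff_smul,
      smul_eq_mul] using h1
  have e1 := key 0 1
  have e2 := key 1 2
  have e3 := key 2 1
  have e4 := key 1 1
  have e5 := key 1 0
  have e6 := key 0 0
  simp [bvec, Fin.sum_univ_six, coeff_X', MvPolynomial.coeff_smul,
    Finsupp.single_eq_single_iff, cons_val_five, Matrix.cons_val_four,
    Matrix.vecHead, Matrix.vecTail] at e1 e2 e3 e4 e5 e6
  intro k
  fin_cases k <;> simp <;> linarith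

lemma hX3 (a b c : Fin 3) : (X a * X b * X c : MvPolynomial (Fin 3) ℚ).IsHomogeneous 3 := by
  simpa using ((isHomogeneous_X ℚ a).mul (isHomogeneous_X ℚ b)).mul (isHomogeneous_X ℚ c)

lemma hX3' (a b c : Fin 3) : (X a * (X b * X c) : MvPolynomial (Fin 3) ℚ).IsHomogeneous 3 := by
  simpa using (isHomogeneous_X ℚ a).mul ((isHomogeneous_X ℚ b).mul (isHomogeneous_X ℚ c))

/-- There exists a vector f = (f₁,f₂,f₃) of ternary cubics over ℚ whose catalecticant
matrix C_f — whose columns are the vectors of second-order partial derivatives of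
(f₁,f₂,f₃), each a triple of linear forms — has rank 6, i.e. C_f is injective
(the domain of second-order constant-coefficient operators is 6-dimensional). -/
theorem stmt14 :
    ∃ f : Fin 3 → MvPolynomial (Fin 3) ℚ,
      (∀ j, (f j).IsHomogeneous 3) ∧
      Module.finrank ℚ (Submodule.span ℚ (Set.range
        fun uv : Fin 3 × Fin 3 =>
          fun j : Fin 3 =>
            MvPolynomial.pderiv uv.1 (MvPolynomial.pderiv uv.2 (f j)))) = 6 := by
  refine ⟨fv, ?_, ?_⟩
  · intro j
    fin_cases j
    · exact (hX3 0 0 0).add (hX3' 0 1 1)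
    · exact (hX3 1 1 1).add (hX3' 0 2 2)
    · exact (hX3 2 2 2).add (hX3 1 1 2)
  · have hrange : (Set.range fun uv : Fin 3 × Fin 3 =>
        fun j : Fin 3 => MvPolynomial.pderiv uv.1 (MvPolynomial.pderiv uv.2 (fv j)))
        = Set.range bvec := by
      apply Set.Subset.antisymm
      · rintro x ⟨uv, rfl⟩
        exact ⟨_, (hcomp uv).symm⟩
      · rintro x ⟨k, rfl⟩
        fin_cases k
        · exact ⟨(0,0), hcomp (0,0)⟩
        · exact ⟨(0,1), hcomp (0,1)⟩
        · exact ⟨(0,2), hcomp (0,2)⟩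
        · exact ⟨(1,1), hcomp (1,1)⟩
        · exact ⟨(1,2), hcomp (1,2)⟩
        · exact ⟨(2,2), hcomp (2,2)⟩
    rw [hrange, finrank_span_eq_card bvec_li]
    simp
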